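/- The restriction of Q = P_m P_{m-1} ⋯ P_1 to N(A)^⊥ has operator norm strictly less than 1; equivalently, every singular value σ of Q corresponding to directions in N(A)^⊥ not fixed by Q satisfies σ < 1, so ||Q x||_2 ≤ σ_max ||x||_2 < ||x||_2 for all nonzero x ∈ N(A)^⊥, where σ_max = max over singular values of Q that are strictly between 0 and 1. -/

import Mathlib

open Matrix Filter

noncomputable def projMat {n : ℕ} (a : Fin n → ℝ) : Matrix (Fin n) (Fin n) ℝ :=
  1 - (a ⬝ᵥ a)⁻¹ • Matrix.vecMulVec a a

noncomputable def vnorm {n : ℕ} (x : Fin n → ℝ) : ℝ := Real.sqrt (x ⬝ᵥ x)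

/-- `x ∈ N(A)^⊥`: `x` is orthogonal to every vector of the null space of `A`. -/
def inNullPerp {m n : ℕ} (A : Matrix (Fin m) (Fin n) ℝ) (x : Fin n → ℝ) : Prop :=
  ∀ z : Fin n → ℝ, A.mulVec z = 0 → x ⬝ᵥ z = 0

/-- `P_k` (0-indexed): the projection onto the hyperplane orthogonal to row `k` of `A`. -/
noncomputable def Pnat {m n : ℕ} (A : Matrix (Fin m) (Fin n) ℝ) (k : ℕ) :
    Matrix (Fin n) (Fin n) ℝ :=
  if h : k < m then projMat (A ⟨k, h⟩) else 1

/-- descending product `f (lo+len-1) * ⋯ * f (lo+1) * f lo` -/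
noncomputable def prodDesc {α : Type*} [Monoid α] (f : ℕ → α) (lo : ℕ) : ℕ → α
  | 0 => 1
  | k + 1 => f (lo + k) * prodDesc f lo k

/-- ascending product `f lo * f (lo+1) * ⋯ * f (lo+len-1)` -/
noncomputable def prodAsc {α : Type*} [Monoid α] (f : ℕ → α) (lo : ℕ) : ℕ → α
  | 0 => 1
  | k + 1 => prodAsc f lo k * f (lo + k)

/-- `Q_j = P_m ⋯ P_{j+1}` (paper indices); here `j : Fin m` is 0-indexed. -/
noncomputable def Qmat {m n : ℕ} (A : Matrix (Fin m) (Fin n) ℝ) (j : Fin m) :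
    Matrix (Fin n) (Fin n) ℝ :=
  prodDesc (Pnat A) ((j : ℕ) + 1) (m - 1 - (j : ℕ))

/-- `Q = P_m P_{m-1} ⋯ P_1`. -/
noncomputable def Qfull {m n : ℕ} (A : Matrix (Fin m) (Fin n) ℝ) : Matrix (Fin n) (Fin n) ℝ :=
  prodDesc (Pnat A) 0 m

/-- `A_S = (Q_1 a_1, …, Q_m a_m)ᵀ`. -/
noncomputable def ASmat {m n : ℕ} (A : Matrix (Fin m) (Fin n) ℝ) : Matrix (Fin m) (Fin n) ℝ :=
  fun i => (Qmat A i).mulVec (A i)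

/-- `M = diag (1/‖a_1‖², …, 1/‖a_m‖²)`. -/
noncomputable def Mdiag {m n : ℕ} (A : Matrix (Fin m) (Fin n) ℝ) : Matrix (Fin m) (Fin m) ℝ :=
  Matrix.diagonal fun i => (A i ⬝ᵥ A i)⁻¹

/-- `Q̄_1 = Q̄_m = 0`, `Q̄_2 = I`, `Q̄_i = P_2 ⋯ P_{i-1}` (paper indices); `i : Fin m` 0-indexed. -/
noncomputable def barQmat {m n : ℕ} (A : Matrix (Fin m) (Fin n) ℝ) (i : Fin m) :
    Matrix (Fin n) (Fin n) ℝ :=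
  if (i : ℕ) = 0 ∨ (i : ℕ) = m - 1 then 0 else prodAsc (Pnat A) 1 ((i : ℕ) - 1)

/-- `Q̄ = P_2 P_3 ⋯ P_{m-1}`. -/
noncomputable def barQfull {m n : ℕ} (A : Matrix (Fin m) (Fin n) ℝ) : Matrix (Fin n) (Fin n) ℝ :=
  prodAsc (Pnat A) 1 (m - 2)

/-- `Ā_S = (Q̄_1 a_1, …, Q̄_m a_m)ᵀ`. -/
noncomputable def barASmat {m n : ℕ} (A : Matrix (Fin m) (Fin n) ℝ) : Matrix (Fin m) (Fin n) ℝ :=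
  fun i => (barQmat A i).mulVec (A i)

/-- `h_{p,q} = a_pᵀ a_q / ‖a_q‖²`. -/
noncomputable def hcoef {m n : ℕ} (A : Matrix (Fin m) (Fin n) ℝ) (p q : Fin m) : ℝ :=
  (A p ⬝ᵥ A q) / (A q ⬝ᵥ A q)

/-!
`P_i` is the orthogonal projection onto `a_iᗮ`, so `‖P_i y‖² = ‖y‖² - (a_i ⬝ y)² / ‖a_i‖²`.
Hence `Q` is non-expansive, and `‖Q x‖ = ‖x‖` forces every factor of the product to fix `x`,
i.e. `a_i ⬝ x = 0` for all `i`; so `x ∈ N(A) ∩ N(A)^⊥ = 0`. The uniform constant `σ < 1` is the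
maximum of `‖Q x‖` over the compact unit sphere of `N(A)^⊥`.
-/

theorem exists_lt_one_forall_norm_apply_le_of_norm_lt {E F : Type*} [NormedAddCommGroup E]
    [NormedSpace ℝ E] [FiniteDimensional ℝ E] [NormedAddCommGroup F] [NormedSpace ℝ F]
    (V : Submodule ℝ E) (f : E →ₗ[ℝ] F) (hf : ∀ x ∈ V, x ≠ 0 → ‖f x‖ < ‖x‖) :
    ∃ σ : ℝ, 0 ≤ σ ∧ σ < 1 ∧ ∀ x ∈ V, ‖f x‖ ≤ σ * ‖x‖ := by
  set S := Metric.sphere (0 : E) 1 ∩ V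
  have hS : IsCompact S := (isCompact_sphere 0 1).inter_right V.closed_of_finiteDimensional
  have hnormalize : ∀ x ∈ V, x ≠ 0 → (‖x‖⁻¹ : ℝ) • x ∈ S := fun x hx hx0 =>
    ⟨mem_sphere_zero_iff_norm.2 (norm_smul_inv_norm hx0), V.smul_mem _ hx⟩
  rcases S.eq_empty_or_nonempty with hS_empty | hS_nonempty
  · refine ⟨0, le_rfl, one_pos, fun x hx => ?_⟩
    obtain rfl : x = 0 := by
      by_contra hx0
      simpa [hS_empty] using hnormalize x hx hx0
    simp
  obtain ⟨u, ⟨hu, huV⟩, hmax⟩ :=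
    hS.exists_isMaxOn hS_nonempty
      (continuous_norm.comp f.continuous_of_finiteDimensional).continuousOn
  rw [mem_sphere_zero_iff_norm] at hu
  refine ⟨‖f u‖, norm_nonneg _, hu ▸ hf u huV (norm_ne_zero_iff.1 (by simp [hu])), fun x hx => ?_⟩
  rcases eq_or_ne x 0 with rfl | hx0
  · simp
  have hx_pos : 0 < ‖x‖ := norm_pos_iff.2 hx0
  have h : ‖x‖⁻¹ * ‖f x‖ ≤ ‖f u‖ := by
    simpa [norm_smul, abs_of_pos hx_pos] using hmax (hnormalize x hx hx0)
  rw [inv_mul_le_iff₀ hx_pos] at h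
  linarith

lemma dotProduct_self_nonneg {ι R : Type*} [Fintype ι] [Ring R] [LinearOrder R]
    [IsStrictOrderedRing R] (v : ι → R) : 0 ≤ v ⬝ᵥ v :=
  Finset.sum_nonneg fun i _ => mul_self_nonneg (v i)

lemma projMat_mulVec {n : ℕ} (a x : Fin n → ℝ) :
    projMat a *ᵥ x = x - ((a ⬝ᵥ x) / (a ⬝ᵥ a)) • a := by
  rw [projMat, sub_mulVec, one_mulVec, smul_mulVec, vecMulVec_mulVec, op_smul_eq_smul, smul_smul,
    div_eq_inv_mul]

lemma projMat_mulVec_dotProduct_self {n : ℕ} (a x : Fin n → ℝ) :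
    (projMat a *ᵥ x) ⬝ᵥ (projMat a *ᵥ x) = x ⬝ᵥ x - (a ⬝ᵥ x) ^ 2 / (a ⬝ᵥ a) := by
  -- `a = 0` is no exception: `0⁻¹ = 0` makes `projMat 0 = 1`.
  rcases eq_or_ne a 0 with rfl | ha
  · simp [projMat]
  have haa : a ⬝ᵥ a ≠ 0 := dotProduct_self_eq_zero.not.2 ha
  rw [projMat_mulVec]
  simp only [sub_dotProduct, dotProduct_sub, smul_dotProduct, dotProduct_smul, smul_eq_mul,
    dotProduct_comm x a]
  field_simp
  ring

lemma vnorm_projMat_mulVec_le {n : ℕ} (a x : Fin n → ℝ) : vnorm (projMat a *ᵥ x) ≤ vnorm x := by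
  refine Real.sqrt_le_sqrt ?_
  rw [projMat_mulVec_dotProduct_self]
  have : 0 ≤ (a ⬝ᵥ x) ^ 2 / (a ⬝ᵥ a) := div_nonneg (sq_nonneg _) (dotProduct_self_nonneg a)
  linarith

lemma dotProduct_eq_zero_of_vnorm_projMat_mulVec_eq {n : ℕ} {a x : Fin n → ℝ}
    (h : vnorm (projMat a *ᵥ x) = vnorm x) : a ⬝ᵥ x = 0 := by
  rcases eq_or_ne a 0 with rfl | ha
  · exact zero_dotProduct x
  have h_sq : (projMat a *ᵥ x) ⬝ᵥ (projMat a *ᵥ x) = x ⬝ᵥ x :=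
    (Real.sqrt_inj (dotProduct_self_nonneg _) (dotProduct_self_nonneg x)).1 h
  rw [projMat_mulVec_dotProduct_self, sub_eq_self,
    div_eq_zero_iff, or_iff_left (dotProduct_self_eq_zero.not.2 ha)] at h_sq
  exact pow_eq_zero_iff two_ne_zero |>.1 h_sq

lemma projMat_mulVec_of_dotProduct_eq_zero {n : ℕ} {a x : Fin n → ℝ} (h : a ⬝ᵥ x = 0) :
    projMat a *ᵥ x = x := by
  simp [projMat_mulVec, h]

lemma vnorm_Pnat_mulVec_le {m n : ℕ} (A : Matrix (Fin m) (Fin n) ℝ) (k : ℕ) (x : Fin n → ℝ) :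
    vnorm (Pnat A k *ᵥ x) ≤ vnorm x := by
  unfold Pnat
  split_ifs
  · exact vnorm_projMat_mulVec_le _ x
  · rw [one_mulVec]

lemma Pnat_mulVec_eq_self_of_vnorm_eq {m n : ℕ} (A : Matrix (Fin m) (Fin n) ℝ) (k : ℕ)
    {x : Fin n → ℝ} (h : vnorm (Pnat A k *ᵥ x) = vnorm x) : Pnat A k *ᵥ x = x := by
  unfold Pnat at h ⊢
  split_ifs at h ⊢
  · exact projMat_mulVec_of_dotProduct_eq_zero (dotProduct_eq_zero_of_vnorm_projMat_mulVec_eq h)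
  · rw [one_mulVec]

section prodDesc

variable {n : ℕ} (f : ℕ → Matrix (Fin n) (Fin n) ℝ) (lo : ℕ)

lemma prodDesc_succ_mulVec (k : ℕ) (x : Fin n → ℝ) :
    prodDesc f lo (k + 1) *ᵥ x = f (lo + k) *ᵥ (prodDesc f lo k *ᵥ x) := by
  rw [prodDesc, mulVec_mulVec]

lemma prodDesc_mulVec_eq_self {k : ℕ} {x : Fin n → ℝ} (hx : ∀ i < k, f (lo + i) *ᵥ x = x) :
    prodDesc f lo k *ᵥ x = x := by
  induction k with
  | zero => simp [prodDesc]
  | succ k ih =>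
    rw [prodDesc_succ_mulVec, ih fun i hi => hx i (by omega), hx k (by omega)]

variable {f}

lemma vnorm_prodDesc_mulVec_le (hle : ∀ i y, vnorm (f i *ᵥ y) ≤ vnorm y) (k : ℕ) (x : Fin n → ℝ) :
    vnorm (prodDesc f lo k *ᵥ x) ≤ vnorm x := by
  induction k with
  | zero => simp [prodDesc]
  | succ k ih => exact prodDesc_succ_mulVec f lo k x ▸ (hle _ _).trans ih

lemma forall_mulVec_eq_self_of_vnorm_prodDesc_mulVec_eq
    (hle : ∀ i y, vnorm (f i *ᵥ y) ≤ vnorm y)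
    (hrigid : ∀ i y, vnorm (f i *ᵥ y) = vnorm y → f i *ᵥ y = y) {k : ℕ} {x : Fin n → ℝ}
    (h : vnorm (prodDesc f lo k *ᵥ x) = vnorm x) : ∀ i < k, f (lo + i) *ᵥ x = x := by
  induction k with
  | zero => simp
  | succ k ih =>
    rw [prodDesc_succ_mulVec] at h
    set y := prodDesc f lo k *ᵥ x
    have hy : vnorm y = vnorm x := le_antisymm (vnorm_prodDesc_mulVec_le lo hle k x) (h ▸ hle _ y)
    have hfix := ih hy
    have hyx : y = x := prodDesc_mulVec_eq_self f lo hfix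
    intro i hi
    rcases Nat.lt_succ_iff_lt_or_eq.1 hi with hi | rfl
    · exact hfix i hi
    · exact hyx ▸ hrigid _ y (h.trans hy.symm)

end prodDesc

lemma vnorm_Qfull_mulVec_lt {m n : ℕ} (A : Matrix (Fin m) (Fin n) ℝ) {x : Fin n → ℝ}
    (hx : inNullPerp A x) (hx0 : x ≠ 0) : vnorm (Qfull A *ᵥ x) < vnorm x := by
  refine (vnorm_prodDesc_mulVec_le 0 (vnorm_Pnat_mulVec_le A) m x).lt_of_ne fun h => hx0 ?_
  have hfix := forall_mulVec_eq_self_of_vnorm_prodDesc_mulVec_eq 0 (vnorm_Pnat_mulVec_le A)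
    (fun i _ => Pnat_mulVec_eq_self_of_vnorm_eq A i) h
  have hAx : A *ᵥ x = 0 := funext fun i => by
    have hi := hfix i i.2
    rw [zero_add, Pnat, dif_pos i.2] at hi
    exact dotProduct_eq_zero_of_vnorm_projMat_mulVec_eq (by rw [hi])
  exact dotProduct_self_eq_zero.1 (hx x hAx)

lemma vnorm_eq_norm_toLp {n : ℕ} (x : Fin n → ℝ) :
    vnorm x = ‖(WithLp.toLp 2 x : EuclideanSpace ℝ (Fin n))‖ := by
  simp [vnorm, EuclideanSpace.norm_eq, dotProduct, sq]

lemma toLp_mem_orthogonal_ker_iff {m n : ℕ} (A : Matrix (Fin m) (Fin n) ℝ) (x : Fin n → ℝ) :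
    WithLp.toLp 2 x ∈ (LinearMap.ker (toLpLin 2 2 A))ᗮ ↔ inNullPerp A x := by
  simp only [Submodule.mem_orthogonal, LinearMap.mem_ker, EuclideanSpace.inner_eq_star_dotProduct,
    star_trivial, inNullPerp]
  constructor
  · exact fun h z hz =>
      h (WithLp.toLp 2 z) (by rw [toLpLin_toLp, toLin'_apply, hz, WithLp.toLp_zero])
  · exact fun h u hu => h u.ofLp (by rw [← toLin'_apply, ← ofLp_toLpLin, hu, WithLp.ofLp_zero])

theorem stmt16_general {m n : ℕ} (A : Matrix (Fin m) (Fin n) ℝ) :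
    ∃ σ : ℝ, 0 ≤ σ ∧ σ < 1 ∧
      (∀ x : Fin n → ℝ, inNullPerp A x → vnorm ((Qfull A).mulVec x) ≤ σ * vnorm x) ∧
      (∀ x : Fin n → ℝ, inNullPerp A x → x ≠ 0 →
        vnorm ((Qfull A).mulVec x) < vnorm x) := by
  have hcontract : ∀ x ∈ (LinearMap.ker (toLpLin 2 2 A))ᗮ, x ≠ 0 →
      ‖toLpLin 2 2 (Qfull A) x‖ < ‖x‖ := fun x hx hx0 => by
    obtain ⟨x⟩ := x
    rw [toLpLin_toLp, toLin'_apply, ← vnorm_eq_norm_toLp, ← vnorm_eq_norm_toLp]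
    exact vnorm_Qfull_mulVec_lt A ((toLp_mem_orthogonal_ker_iff A _).1 hx)
      (by rintro rfl; exact hx0 rfl)
  obtain ⟨σ, hσ_nonneg, hσ_lt, hσ⟩ := exists_lt_one_forall_norm_apply_le_of_norm_lt _ _ hcontract
  refine ⟨σ, hσ_nonneg, hσ_lt, fun x hx => ?_, fun x hx hx0 => vnorm_Qfull_mulVec_lt A hx hx0⟩
  simpa [vnorm_eq_norm_toLp] using hσ _ ((toLp_mem_orthogonal_ker_iff A x).2 hx)

/-- the restriction of `Q = P_m ⋯ P_1` to `N(A)^⊥` has norm `< 1`: there is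
`σ` with `0 ≤ σ < 1` and `‖Q x‖ ≤ σ ‖x‖` on `N(A)^⊥`; in particular `‖Q x‖ < ‖x‖` for
every nonzero `x ∈ N(A)^⊥`. -/
theorem stmt16 {m n : ℕ} (A : Matrix (Fin m) (Fin n) ℝ) (hA : ∀ i, A i ≠ 0) :
    ∃ σ : ℝ, 0 ≤ σ ∧ σ < 1 ∧
      (∀ x : Fin n → ℝ, inNullPerp A x → vnorm ((Qfull A).mulVec x) ≤ σ * vnorm x) ∧
      (∀ x : Fin n → ℝ, inNullPerp A x → x ≠ 0 →
        vnorm ((Qfull A).mulVec x) < vnorm x) :=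
  stmt16_general A
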